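/- Let G be a connected graph on vertex set {1,...,n} with n ≥ 2 and Φ = (F_1,...,F_n) with γ(F_i) ≥ 2 for all i. If D is a minimum dominating set of G[Φ], |V(F_i)| ≥ 2 and |D ∩ V(F_i)| ≠ 1 for all i ∈ [n], then letting i_1,...,i_s be the indices with D ∩ V(F_{i_r}) ≠ ∅, we have |D ∩ V(F_{i_r})| = 2 for all r, the set {i_1,...,i_s} is an efficient dominating set of G, and 2γ(G) = γ_t(G) = γ(G[Φ]) = γ_t(G[Φ]) = γ_p(G[Φ]). -/

import Mathlib

open scoped Classical

/-- A dominating set: every vertex is in `D` or adjacent to a vertex of `D`. -/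
def isDominatingSet {V : Type*} (H : SimpleGraph V) (D : Finset V) : Prop :=
  ∀ v : V, v ∈ D ∨ ∃ u ∈ D, H.Adj u v

/-- A total dominating set: every vertex has a neighbor in `D`. -/
def isTotalDominatingSet {V : Type*} (H : SimpleGraph V) (D : Finset V) : Prop :=
  ∀ v : V, ∃ u ∈ D, H.Adj u v

def isMinimalDominatingSet {V : Type*} (H : SimpleGraph V) (D : Finset V) : Prop :=
  isDominatingSet H D ∧ ∀ D' : Finset V, D' ⊂ D → ¬ isDominatingSet H D'

def isMinimalTotalDominatingSet {V : Type*} (H : SimpleGraph V) (D : Finset V) : Prop :=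
  isTotalDominatingSet H D ∧ ∀ D' : Finset V, D' ⊂ D → ¬ isTotalDominatingSet H D'

noncomputable def domNum {V : Type*} (H : SimpleGraph V) : ℕ :=
  sInf {k | ∃ D : Finset V, isDominatingSet H D ∧ D.card = k}

noncomputable def totalDomNum {V : Type*} (H : SimpleGraph V) : ℕ :=
  sInf {k | ∃ D : Finset V, isTotalDominatingSet H D ∧ D.card = k}

noncomputable def upperDomNum {V : Type*} (H : SimpleGraph V) : ℕ :=
  sSup {k | ∃ D : Finset V, isMinimalDominatingSet H D ∧ D.card = k}

noncomputable def upperTotalDomNum {V : Type*} (H : SimpleGraph V) : ℕ :=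
  sSup {k | ∃ D : Finset V, isMinimalTotalDominatingSet H D ∧ D.card = k}

/-- Well (γ-)dominated: all minimal dominating sets have the same size. -/
def WellDominated {V : Type*} (H : SimpleGraph V) : Prop :=
  ∀ D₁ D₂ : Finset V, isMinimalDominatingSet H D₁ → isMinimalDominatingSet H D₂ →
    D₁.card = D₂.card

/-- Well γ_t-dominated: all minimal total dominating sets have the same size. -/
def WellTotalDominated {V : Type*} (H : SimpleGraph V) : Prop :=
  ∀ D₁ D₂ : Finset V, isMinimalTotalDominatingSet H D₁ → isMinimalTotalDominatingSet H D₂ →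
    D₁.card = D₂.card

/-- Restrained dominating set: dominating and every vertex outside `D` has a
neighbor outside `D`. -/
def isRestrainedDominatingSet {V : Type*} (H : SimpleGraph V) (D : Finset V) : Prop :=
  isDominatingSet H D ∧ ∀ v ∉ D, ∃ u ∉ D, H.Adj u v

/-- Outer-connected dominating set: dominating and the subgraph induced by the
complement of `D` is connected. -/
def isOuterConnectedDominatingSet {V : Type*} (H : SimpleGraph V) (D : Finset V) : Prop :=
  isDominatingSet H D ∧ (H.induce ((↑D : Set V)ᶜ)).Connected

def isTotalRestrainedDominatingSet {V : Type*} (H : SimpleGraph V) (D : Finset V) : Prop :=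
  isTotalDominatingSet H D ∧ ∀ v ∉ D, ∃ u ∉ D, H.Adj u v

def isTotalOuterConnectedDominatingSet {V : Type*} (H : SimpleGraph V) (D : Finset V) : Prop :=
  isTotalDominatingSet H D ∧ (H.induce ((↑D : Set V)ᶜ)).Connected

noncomputable def restrainedDomNum {V : Type*} (H : SimpleGraph V) : ℕ :=
  sInf {k | ∃ D : Finset V, isRestrainedDominatingSet H D ∧ D.card = k}

noncomputable def ocDomNum {V : Type*} (H : SimpleGraph V) : ℕ :=
  sInf {k | ∃ D : Finset V, isOuterConnectedDominatingSet H D ∧ D.card = k}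

noncomputable def totalRestrainedDomNum {V : Type*} (H : SimpleGraph V) : ℕ :=
  sInf {k | ∃ D : Finset V, isTotalRestrainedDominatingSet H D ∧ D.card = k}

noncomputable def totalOcDomNum {V : Type*} (H : SimpleGraph V) : ℕ :=
  sInf {k | ∃ D : Finset V, isTotalOuterConnectedDominatingSet H D ∧ D.card = k}

/-- Paired dominating set: dominating and the induced subgraph on `D` has a
perfect matching. -/
def isPairedDominatingSet {V : Type*} (H : SimpleGraph V) (D : Finset V) : Prop :=
  isDominatingSet H D ∧
    ∃ M : SimpleGraph.Subgraph (H.induce (↑D : Set V)), M.IsPerfectMatching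

noncomputable def pairedDomNum {V : Type*} (H : SimpleGraph V) : ℕ :=
  sInf {k | ∃ D : Finset V, isPairedDominatingSet H D ∧ D.card = k}

def isIndependentSet {V : Type*} (H : SimpleGraph V) (D : Finset V) : Prop :=
  ∀ u ∈ D, ∀ v ∈ D, ¬ H.Adj u v

def isMaximalIndependentSet {V : Type*} (H : SimpleGraph V) (D : Finset V) : Prop :=
  isIndependentSet H D ∧ ∀ D' : Finset V, D ⊂ D' → ¬ isIndependentSet H D'

/-- The independent domination number `i(H)`. -/
noncomputable def indepDomNum {V : Type*} (H : SimpleGraph V) : ℕ :=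
  sInf {k | ∃ D : Finset V, isMaximalIndependentSet H D ∧ D.card = k}

/-- The independence number `β₀(H)`. -/
noncomputable def indepNum {V : Type*} (H : SimpleGraph V) : ℕ :=
  sSup {k | ∃ D : Finset V, isIndependentSet H D ∧ D.card = k}

/-- An efficient dominating set: every vertex is dominated by exactly one
member of `D`. -/
def isEfficientDominatingSet {V : Type*} (H : SimpleGraph V) (D : Finset V) : Prop :=
  ∀ v : V, ∃! u : V, u ∈ D ∧ (u = v ∨ H.Adj u v)

/-- The generalized lexicographic product `G[Φ]` of a graph `G` on `Fin n` and a
family `Φ = (F 0, …, F (n-1))` of pairwise disjoint graphs: the `F i` are induced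
subgraphs, and vertices in distinct `F i`, `F j` are adjacent iff `i j ∈ E(G)`. -/
def GLP {n : ℕ} (G : SimpleGraph (Fin n)) {V : Fin n → Type*}
    (F : ∀ i, SimpleGraph (V i)) : SimpleGraph (Σ i, V i) where
  Adj x y := (x.1 ≠ y.1 ∧ G.Adj x.1 y.1) ∨ ∃ h : x.1 = y.1, (F y.1).Adj (h ▸ x.2) y.2
  symm := by
    constructor
    rintro ⟨i, a⟩ ⟨j, b⟩ (⟨hne, hadj⟩ | ⟨h, hadj⟩)
    · exact Or.inl ⟨fun hh => hne hh.symm, hadj.symm⟩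
    · dsimp only at h
      subst h
      exact Or.inr ⟨rfl, hadj.symm⟩
  loopless := by
    constructor
    rintro ⟨i, a⟩ (⟨hne, _⟩ | ⟨h, hadj⟩)
    · exact hne rfl
    · exact (F i).irrefl hadj

/-- The number of vertices of `D ∩ V(F i)`. -/
noncomputable def layerCount {n : ℕ} {V : Fin n → Type*} [∀ i, Fintype (V i)]
    (D : Finset (Σ i, V i)) (i : Fin n) : ℕ :=
  (D.filter (fun x => x.1 = i)).card

/-!
The indices `S` of the nonempty layers of `D` dominate `G`, and each nonempty layer has at
least two vertices, so `2γ(G) ≤ 2|S| ≤ |D| = γ(G[Φ]) ≤ γ_t(G) ≤ 2γ(G)`: a total dominating set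
of `G`, lifted along a section of the layers, dominates `G[Φ]`, and adding a neighbour of every
vertex makes a dominating set total. If a vertex `v` of `G` had two dominators in `S`, both
could use `v` as their neighbour and `G` would have a total dominating set of size `2|S| - 1`;
so `S` is efficient. Then each `s ∈ S` together with a neighbour `j s` gives disjoint edges
covering `S ∪ j(S)`, whose lift is a paired dominating set of `G[Φ]` of size at most `2|S|`.
-/

section Domination

variable {W : Type*} {H : SimpleGraph W}

theorem isDominatingSet_iff_forall_exists {D : Finset W} :
    isDominatingSet H D ↔ ∀ v, ∃ u ∈ D, u = v ∨ H.Adj u v := by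
  constructor
  · intro hD v
    rcases hD v with hv | ⟨u, hu, huv⟩
    exacts [⟨v, hv, Or.inl rfl⟩, ⟨u, hu, Or.inr huv⟩]
  · intro hD v
    obtain ⟨u, hu, rfl | huv⟩ := hD v
    exacts [Or.inl hu, Or.inr ⟨u, hu, huv⟩]

theorem isDominatingSet_of_isTotalDominatingSet {D : Finset W}
    (hD : isTotalDominatingSet H D) : isDominatingSet H D :=
  fun v => Or.inr (hD v)

theorem isTotalDominatingSet_of_isPairedDominatingSet {D : Finset W}
    (hD : isPairedDominatingSet H D) : isTotalDominatingSet H D := by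
  obtain ⟨hdom, M, hM⟩ := hD
  intro v
  rcases hdom v with hv | hv
  · obtain ⟨w, hw, -⟩ := hM.1 (hM.2 (⟨v, hv⟩ : (↑D : Set W)))
    exact ⟨w, w.2, (M.adj_sub hw).symm⟩
  · exact hv

theorem domNum_le_card {D : Finset W} (hD : isDominatingSet H D) : domNum H ≤ D.card :=
  Nat.sInf_le ⟨D, hD, rfl⟩

theorem totalDomNum_le_card {D : Finset W} (hD : isTotalDominatingSet H D) :
    totalDomNum H ≤ D.card :=
  Nat.sInf_le ⟨D, hD, rfl⟩

theorem pairedDomNum_le_card {D : Finset W} (hD : isPairedDominatingSet H D) :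
    pairedDomNum H ≤ D.card :=
  Nat.sInf_le ⟨D, hD, rfl⟩

theorem exists_card_eq_sInf_card {p : Finset W → Prop} {D : Finset W} (hD : p D) :
    ∃ D', p D' ∧ D'.card = sInf {k | ∃ D, p D ∧ D.card = k} :=
  Nat.sInf_mem (s := {k | ∃ D, p D ∧ D.card = k}) ⟨_, D, hD, rfl⟩

theorem exists_isDominatingSet_card_eq_domNum [Fintype W] :
    ∃ D, isDominatingSet H D ∧ D.card = domNum H :=
  exists_card_eq_sInf_card (D := Finset.univ) fun v => Or.inl (Finset.mem_univ v)

theorem exists_isTotalDominatingSet_card_eq_totalDomNum {D : Finset W}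
    (hD : isTotalDominatingSet H D) : ∃ D', isTotalDominatingSet H D' ∧ D'.card = totalDomNum H :=
  exists_card_eq_sInf_card hD

theorem domNum_le_totalDomNum {D : Finset W} (hD : isTotalDominatingSet H D) :
    domNum H ≤ totalDomNum H := by
  obtain ⟨D', hD', hcard⟩ := exists_isTotalDominatingSet_card_eq_totalDomNum hD
  exact hcard ▸ domNum_le_card (isDominatingSet_of_isTotalDominatingSet hD')

theorem totalDomNum_le_pairedDomNum {D : Finset W} (hD : isPairedDominatingSet H D) :
    totalDomNum H ≤ pairedDomNum H := by
  obtain ⟨D', hD', hcard⟩ := exists_card_eq_sInf_card hD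
  exact (totalDomNum_le_card (isTotalDominatingSet_of_isPairedDominatingSet hD')).trans_eq hcard

theorem isTotalDominatingSet_union_image [DecidableEq W] {S : Finset W} {j : W → W}
    (hS : isDominatingSet H S) (hj : ∀ v, H.Adj v (j v)) :
    isTotalDominatingSet H (S ∪ S.image j) := by
  intro v
  rcases hS v with hv | ⟨u, hu, huv⟩
  · exact ⟨j v, Finset.mem_union_right _ (Finset.mem_image_of_mem j hv), (hj v).symm⟩
  · exact ⟨u, Finset.mem_union_left _ hu, huv⟩

theorem totalDomNum_le_two_mul_domNum [Fintype W] (hH : ∀ v, ∃ w, H.Adj v w) :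
    totalDomNum H ≤ 2 * domNum H := by
  choose j hj using hH
  obtain ⟨D, hD, hcard⟩ := exists_isDominatingSet_card_eq_domNum (H := H)
  calc totalDomNum H ≤ (D ∪ D.image j).card :=
        totalDomNum_le_card (isTotalDominatingSet_union_image hD hj)
    _ ≤ D.card + D.card := (Finset.card_union_le _ _).trans (by grw [Finset.card_image_le])
    _ = 2 * domNum H := by omega

theorem adj_or_adj_of_dominate {s s' v : W} (hs : s = v ∨ H.Adj s v) (hs' : s' = v ∨ H.Adj s' v)
    (hne : s ≠ s') : H.Adj s v ∨ H.Adj s s' := by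
  rcases hs with rfl | hs
  · rcases hs' with rfl | hs'
    exacts [absurd rfl hne, Or.inr hs'.symm]
  · exact Or.inl hs

theorem isEfficientDominatingSet_of_two_mul_card_le_totalDomNum [DecidableEq W] {S : Finset W}
    {j : W → W} (hS : isDominatingSet H S) (hj : ∀ v, H.Adj v (j v))
    (hγ : 2 * S.card ≤ totalDomNum H) :
    isEfficientDominatingSet H S := by
  intro v
  obtain ⟨s, hs, hsv⟩ := isDominatingSet_iff_forall_exists.1 hS v
  refine ⟨s, ⟨hs, hsv⟩, fun s' ⟨hs', hs'v⟩ => ?_⟩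
  by_contra hne
  -- `s` and `s'` both take `v` (or each other) as their neighbour instead of `j s`, `j s'`
  set T := insert v (S ∪ (S \ {s, s'}).image j)
  have hT : isTotalDominatingSet H T := by
    intro u
    obtain ⟨t, ht, rfl | htu⟩ := isDominatingSet_iff_forall_exists.1 hS u
    · by_cases hts : t = s
      · subst t
        rcases adj_or_adj_of_dominate hsv hs'v (Ne.symm hne) with h | h
        · exact ⟨v, Finset.mem_insert_self _ _, h.symm⟩
        · exact ⟨s', by simp [T, hs'], h.symm⟩
      by_cases hts' : t = s'
      · subst t
        rcases adj_or_adj_of_dominate hs'v hsv hne with h | h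
        · exact ⟨v, Finset.mem_insert_self _ _, h.symm⟩
        · exact ⟨s, by simp [T, hs], h.symm⟩
      refine ⟨j t, Finset.mem_insert_of_mem (Finset.mem_union_right _ ?_), (hj t).symm⟩
      exact Finset.mem_image_of_mem j (by simp [ht, hts, hts'])
    · exact ⟨t, by simp [T, ht], htu⟩
  have hpair : ({s, s'} : Finset W) ⊆ S :=
    Finset.insert_subset hs (Finset.singleton_subset_iff.2 hs')
  have hcard : T.card + 1 ≤ 2 * S.card := by
    have h2 := Finset.card_le_card hpair
    rw [Finset.card_pair (Ne.symm hne)] at h2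
    calc T.card + 1 ≤ (S ∪ (S \ {s, s'}).image j).card + 2 := by grw [Finset.card_insert_le]
      _ ≤ S.card + (S \ {s, s'}).card + 2 := by
          grw [Finset.card_union_le, Finset.card_image_le]
      _ = 2 * S.card := by
          rw [Finset.card_sdiff_of_subset hpair, Finset.card_pair (Ne.symm hne)]
          omega
  have := totalDomNum_le_card hT
  omega

def IsEdgePairing (H : SimpleGraph W) (P : Finset W) (σ : W → W) : Prop :=
  ∀ x ∈ P, σ x ∈ P ∧ σ (σ x) = x ∧ H.Adj x (σ x)

theorem IsEdgePairing.exists_isPerfectMatching {P : Finset W} {σ : W → W}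
    (h : IsEdgePairing H P σ) : ∃ M : (H.induce (↑P : Set W)).Subgraph, M.IsPerfectMatching := by
  let τ : (↑P : Set W) → (↑P : Set W) := fun x => ⟨σ x, (h x x.2).1⟩
  refine ⟨{ verts := Set.univ
            Adj x y := τ x = y
            adj_sub := ?_
            edge_vert _ := Set.mem_univ _
            symm := ?_ }, ?_⟩
  · rintro x _ rfl
    exact (h x x.2).2.2
  · constructor
    rintro x _ rfl
    exact Subtype.ext (h x x.2).2.1
  · exact SimpleGraph.Subgraph.isPerfectMatching_iff.2 fun x =>
      ⟨τ x, rfl, fun _ hy => Eq.symm hy⟩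

theorem exists_isEdgePairing_of_isEfficientDominatingSet [DecidableEq W] {S : Finset W}
    {j : W → W} (hS : isEfficientDominatingSet H S) (hj : ∀ v, H.Adj v (j v)) :
    ∃ σ, IsEdgePairing H (S ∪ S.image j) σ := by
  choose d hd using fun v => (hS v).exists
  have hjS : ∀ s ∈ S, j s ∉ S := fun s hs hjs =>
    (hj s).ne ((hS (j s)).unique ⟨hs, Or.inr (hj s)⟩ ⟨hjs, Or.inl rfl⟩)
  have hdj : ∀ s ∈ S, d (j s) = s := fun s hs =>
    (hS (j s)).unique (hd (j s)) ⟨hs, Or.inr (hj s)⟩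
  refine ⟨fun v => if v ∈ S then j v else d v, ?_⟩
  intro x hx
  rcases Finset.mem_union.1 hx with hx | hx
  · simp only [if_pos hx, if_neg (hjS x hx), hdj x hx]
    exact ⟨Finset.mem_union_right _ (Finset.mem_image_of_mem j hx), trivial, hj x⟩
  · obtain ⟨s, hs, rfl⟩ := Finset.mem_image.1 hx
    simp only [if_neg (hjS s hs), hdj s hs, if_pos hs]
    exact ⟨Finset.mem_union_left _ hs, trivial, (hj s).symm⟩

end Domination

section LexicographicProduct

variable {n : ℕ} {G : SimpleGraph (Fin n)} {V : Fin n → Type*} {F : ∀ i, SimpleGraph (V i)}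

theorem GLP_adj_of_adj {i k : Fin n} (h : G.Adj i k) (a : V i) (b : V k) :
    (GLP G F).Adj ⟨i, a⟩ ⟨k, b⟩ :=
  Or.inl ⟨h.ne, h⟩

theorem isTotalDominatingSet_GLP_image {P : Finset (Fin n)} (hP : isTotalDominatingSet G P)
    (x : ∀ i, V i) : isTotalDominatingSet (GLP G F) (P.image fun i => ⟨i, x i⟩) := by
  rintro ⟨k, b⟩
  obtain ⟨i, hi, hik⟩ := hP k
  exact ⟨⟨i, x i⟩, Finset.mem_image_of_mem _ hi, GLP_adj_of_adj hik _ _⟩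

theorem IsEdgePairing.GLP_image {P : Finset (Fin n)} {ρ : Fin n → Fin n}
    (h : IsEdgePairing G P ρ) (x : ∀ i, V i) :
    IsEdgePairing (GLP G F) (P.image fun i => ⟨i, x i⟩) fun u => ⟨ρ u.1, x (ρ u.1)⟩ := by
  intro u hu
  obtain ⟨i, hi, rfl⟩ := Finset.mem_image.1 hu
  obtain ⟨hρi, hρρi, hadj⟩ := h i hi
  exact ⟨Finset.mem_image_of_mem _ hρi, by dsimp only; rw [hρρi], GLP_adj_of_adj hadj _ _⟩

theorem domNum_GLP_le_card [∀ i, Nonempty (V i)] {P : Finset (Fin n)}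
    (hP : isTotalDominatingSet G P) : domNum (GLP G F) ≤ P.card :=
  (domNum_le_card (isDominatingSet_of_isTotalDominatingSet
    (isTotalDominatingSet_GLP_image hP fun i => Classical.arbitrary (V i)))).trans
    Finset.card_image_le

theorem exists_isPairedDominatingSet_GLP_card_le [∀ i, Nonempty (V i)] {S : Finset (Fin n)}
    {j : Fin n → Fin n} (hS : isEfficientDominatingSet G S) (hj : ∀ v, G.Adj v (j v)) :
    ∃ P, isPairedDominatingSet (GLP G F) P ∧ P.card ≤ 2 * S.card := by
  let x : ∀ i, V i := fun i => Classical.arbitrary (V i)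
  have hSdom : isDominatingSet G S :=
    isDominatingSet_iff_forall_exists.2 fun v => (hS v).exists
  obtain ⟨ρ, hρ⟩ := exists_isEdgePairing_of_isEfficientDominatingSet hS hj
  refine ⟨(S ∪ S.image j).image fun i => ⟨i, x i⟩,
    ⟨?_, (hρ.GLP_image x).exists_isPerfectMatching⟩, ?_⟩
  · exact isDominatingSet_of_isTotalDominatingSet
      (isTotalDominatingSet_GLP_image (isTotalDominatingSet_union_image hSdom hj) x)
  · grw [Finset.card_image_le, Finset.card_union_le, Finset.card_image_le]
    omega

noncomputable def layerSupport [∀ i, Fintype (V i)] (D : Finset (Σ i, V i)) : Finset (Fin n) :=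
  Finset.univ.filter fun i => ∃ a : V i, (⟨i, a⟩ : Σ i, V i) ∈ D

variable [∀ i, Fintype (V i)] {D : Finset (Σ i, V i)}

theorem mem_layerSupport {i : Fin n} : i ∈ layerSupport D ↔ ∃ a : V i, ⟨i, a⟩ ∈ D := by
  simp [layerSupport]

theorem isDominatingSet_layerSupport [∀ i, Nonempty (V i)] (hD : isDominatingSet (GLP G F) D) :
    isDominatingSet G (layerSupport D) := by
  refine isDominatingSet_iff_forall_exists.2 fun k => ?_
  obtain ⟨⟨i, a⟩, ha, hak⟩ :=
    isDominatingSet_iff_forall_exists.1 hD ⟨k, Classical.arbitrary (V k)⟩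
  refine ⟨i, mem_layerSupport.2 ⟨a, ha⟩, ?_⟩
  rcases hak with h | ⟨-, h⟩ | ⟨h, -⟩
  exacts [Or.inl (congrArg Sigma.fst h), Or.inr h, Or.inl h]

theorem layerCount_ne_zero_iff {i : Fin n} : layerCount D i ≠ 0 ↔ i ∈ layerSupport D := by
  rw [layerCount, Finset.card_ne_zero, mem_layerSupport]
  constructor
  · rintro ⟨⟨k, a⟩, hk⟩
    obtain ⟨ha, rfl⟩ := Finset.mem_filter.1 hk
    exact ⟨a, ha⟩
  · rintro ⟨a, ha⟩
    exact ⟨⟨i, a⟩, Finset.mem_filter.2 ⟨ha, rfl⟩⟩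

theorem card_eq_sum_layerCount : D.card = ∑ i ∈ layerSupport D, layerCount D i := by
  rw [Finset.card_eq_sum_card_fiberwise (f := Sigma.fst) (t := Finset.univ) fun _ _ =>
    Finset.mem_univ _]
  refine (Finset.sum_subset (Finset.subset_univ _) fun i _ hi => ?_).symm
  exact not_not.1 (mt layerCount_ne_zero_iff.1 hi)

theorem two_le_layerCount (hD1 : ∀ i, layerCount D i ≠ 1) :
    ∀ i ∈ layerSupport D, 2 ≤ layerCount D i := fun i hi => by
  have := layerCount_ne_zero_iff.2 hi
  have := hD1 i
  omega

theorem two_mul_card_layerSupport_le (hD1 : ∀ i, layerCount D i ≠ 1) :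
    2 * (layerSupport D).card ≤ D.card := by
  rw [card_eq_sum_layerCount, mul_comm, ← smul_eq_mul]
  exact Finset.card_nsmul_le_sum _ _ 2 (two_le_layerCount hD1)

theorem layerCount_eq_two (hD1 : ∀ i, layerCount D i ≠ 1)
    (hD : D.card ≤ 2 * (layerSupport D).card) : ∀ i ∈ layerSupport D, layerCount D i = 2 := by
  have hsum : ∑ _i ∈ layerSupport D, 2 = ∑ i ∈ layerSupport D, layerCount D i := by
    have := two_mul_card_layerSupport_le hD1
    rw [Finset.sum_const, smul_eq_mul, ← card_eq_sum_layerCount]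
    omega
  exact fun i hi => ((Finset.sum_eq_sum_iff_of_le (two_le_layerCount hD1)).1 hsum i hi).symm

end LexicographicProduct

theorem stmt_13_general {n : ℕ} (hn : 2 ≤ n) (G : SimpleGraph (Fin n)) (hG : G.Connected)
    (V : Fin n → Type) [∀ i, Fintype (V i)] (F : ∀ i, SimpleGraph (V i))
    (hV : ∀ i, 2 ≤ Fintype.card (V i))
    (D : Finset (Σ i, V i))
    (hD : isDominatingSet (GLP G F) D) (hDmin : D.card = domNum (GLP G F))
    (hD1 : ∀ i, layerCount D i ≠ 1) :
    (∀ i ∈ Finset.univ.filter (fun i => ∃ a : V i, (⟨i, a⟩ : Σ i, V i) ∈ D),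
      layerCount D i = 2) ∧
    isEfficientDominatingSet G
      (Finset.univ.filter (fun i => ∃ a : V i, (⟨i, a⟩ : Σ i, V i) ∈ D)) ∧
    (2 * domNum G = totalDomNum G ∧
     totalDomNum G = domNum (GLP G F) ∧
     domNum (GLP G F) = totalDomNum (GLP G F) ∧
     totalDomNum (GLP G F) = pairedDomNum (GLP G F)) := by
  have : ∀ i, Nonempty (V i) := fun i => Fintype.card_pos_iff.1 (by linarith [hV i])
  have : Nontrivial (Fin n) := Fin.nontrivial_iff_two_le.2 hn
  choose j hj using hG.preconnected.exists_adj_of_nontrivial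
  change (∀ i ∈ layerSupport D, _) ∧ isEfficientDominatingSet G (layerSupport D) ∧ _
  have hS := isDominatingSet_layerSupport hD
  obtain ⟨T, hT, hTcard⟩ :=
    exists_isTotalDominatingSet_card_eq_totalDomNum (isTotalDominatingSet_union_image hS hj)
  have hDS := two_mul_card_layerSupport_le hD1
  have hγS := domNum_le_card hS
  have hγtγ := totalDomNum_le_two_mul_domNum fun v => ⟨j v, hj v⟩
  have hγγt := hTcard ▸ domNum_GLP_le_card (F := F) hT
  have heff := isEfficientDominatingSet_of_two_mul_card_le_totalDomNum hS hj (by omega)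
  obtain ⟨P, hP, hPcard⟩ := exists_isPairedDominatingSet_GLP_card_le (F := F) heff hj
  have := domNum_le_totalDomNum (isTotalDominatingSet_of_isPairedDominatingSet hP)
  have := totalDomNum_le_pairedDomNum hP
  have := pairedDomNum_le_card hP
  exact ⟨layerCount_eq_two hD1 (by omega), heff, by omega, by omega, by omega, by omega⟩

/-- If `γ(F i) ≥ 2` and `|V(F i)| ≥ 2` for all `i`, `D` is a minimum dominating
set of `G[Φ]` and `|D ∩ V(F i)| ≠ 1` for all `i`, then every nonempty
`D ∩ V(F i)` has exactly two elements, the set of indices `i` with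
`D ∩ V(F i) ≠ ∅` is an efficient dominating set of `G`, and
`2γ(G) = γ_t(G) = γ(G[Φ]) = γ_t(G[Φ]) = γ_p(G[Φ])`. -/
theorem stmt_13 {n : ℕ} (hn : 2 ≤ n) (G : SimpleGraph (Fin n)) (hG : G.Connected)
    (V : Fin n → Type) [∀ i, Fintype (V i)] (F : ∀ i, SimpleGraph (V i))
    (hF : ∀ i, 2 ≤ domNum (F i)) (hV : ∀ i, 2 ≤ Fintype.card (V i))
    (D : Finset (Σ i, V i))
    (hD : isDominatingSet (GLP G F) D) (hDmin : D.card = domNum (GLP G F))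
    (hD1 : ∀ i, layerCount D i ≠ 1) :
    (∀ i ∈ Finset.univ.filter (fun i => ∃ a : V i, (⟨i, a⟩ : Σ i, V i) ∈ D),
      layerCount D i = 2) ∧
    isEfficientDominatingSet G
      (Finset.univ.filter (fun i => ∃ a : V i, (⟨i, a⟩ : Σ i, V i) ∈ D)) ∧
    (2 * domNum G = totalDomNum G ∧
     totalDomNum G = domNum (GLP G F) ∧
     domNum (GLP G F) = totalDomNum (GLP G F) ∧
     totalDomNum (GLP G F) = pairedDomNum (GLP G F)) :=
  stmt_13_general hn G hG V F hV D hD hDmin hD1
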